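/- arXiv:1206.5059 — 4 statements merged into one kernel-verified Lean document; each statement's English description precedes it below -/
import Mathlib

section
/- There exists r₀ > 0 (depending on ν, δ, α₁, α₂) such that for every nonempty connected open set U contained in the annulus {x ∈ ℝ² : δ < |x| < δ + r₀}, there is no continuously differentiable function p : U → ℝ satisfying the stationary Navier–Stokes equation −ν Δu + (u·∇)u = −∇p at every point of U, where Δu denotes the componentwise Laplacian of u and ((u·∇)u)(x) denotes the derivative of u at x applied to the vector u(x). In other words, the parallel laminar flow with Poiseuille-type profile h cannot be a stationary Navier–Stokes flow near a boundary portion of constant nonzero curvature 1/δ. -/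
noncomputable section

/-- Poiseuille-type speed profile `h(r) = α₁ r − (α₂/2) r²`. -/
def prof (α₁ α₂ r : ℝ) : ℝ := α₁ * r - α₂ / 2 * r ^ 2

/-- Euclidean norm on `ℝ × ℝ`. -/
def nrm (x : ℝ × ℝ) : ℝ := Real.sqrt (x.1 ^ 2 + x.2 ^ 2)

/-- Parallel laminar flow `u(x) = h(|x| − δ) (x₂, −x₁)/|x|` around the origin. -/
def vel (δ α₁ α₂ : ℝ) (x : ℝ × ℝ) : ℝ × ℝ :=
  (prof α₁ α₂ (nrm x - δ) / nrm x) • (x.2, -x.1)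

/-- Componentwise Laplacian of a planar vector field. -/
def lap (f : ℝ × ℝ → ℝ × ℝ) (x : ℝ × ℝ) : ℝ × ℝ :=
  fderiv ℝ (fun y => fderiv ℝ f y (1, 0)) x (1, 0) +
  fderiv ℝ (fun y => fderiv ℝ f y (0, 1)) x (0, 1)

/-- Gradient of a scalar function on `ℝ × ℝ`. -/
def grad (p : ℝ × ℝ → ℝ) (x : ℝ × ℝ) : ℝ × ℝ :=
  (fderiv ℝ p x (1, 0), fderiv ℝ p x (0, 1))

/-!
With `J = rot`, `J v = (v₂, -v₁)`, the flow is the swirl `u x = f(|x|) J x` with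
`f(r) = h(r - δ)/r = (α₁ + α₂δ) - B r - C/r`, where `B = α₂/2` and `C = δα₁ + α₂δ²/2`.
Its convective term `Du(u) = -f(|x|)² x` is radial, hence a gradient, while
`Δu = g(|x|) J x` with `g = f'' + 3f'/r`. So `∇p = f² x + ν g J x`, and the symmetry of the
second derivatives of `p` forces the curl `r g'(r) + 2 g(r)` of `g(|x|) J x` to vanish. For
our profile this curl is `-(3B/r + C/r³) < 0` at every `r > 0`, so any `r₀` works.
-/

open Filter Topology ContinuousLinearMap

namespace LaminarFlow

def rot : ℝ × ℝ →L[ℝ] ℝ × ℝ := (snd ℝ ℝ ℝ).prod (-fst ℝ ℝ ℝ)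

@[simp] lemma rot_apply (v : ℝ × ℝ) : rot v = (v.2, -v.1) := rfl

def dotL : ℝ × ℝ →L[ℝ] ℝ × ℝ →L[ℝ] ℝ :=
  (fst ℝ ℝ ℝ).smulRight (fst ℝ ℝ ℝ) + (snd ℝ ℝ ℝ).smulRight (snd ℝ ℝ ℝ)

@[simp] lemma dotL_apply (x v : ℝ × ℝ) : dotL x v = x.1 * v.1 + x.2 * v.2 := by
  simp [dotL]

lemma dotL_comm (x v : ℝ × ℝ) : dotL x v = dotL v x := by
  simp only [dotL_apply]; ring

lemma dotL_grad (p : ℝ × ℝ → ℝ) (x : ℝ × ℝ) : dotL (grad p x) = fderiv ℝ p x := by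
  ext <;> simp [grad]

lemma nrm_sq (x : ℝ × ℝ) : nrm x ^ 2 = x.1 ^ 2 + x.2 ^ 2 :=
  Real.sq_sqrt (by positivity)

lemma continuous_nrm : Continuous nrm := by
  unfold nrm; fun_prop

variable {f f' f'' : ℝ → ℝ} {x : ℝ × ℝ}

lemma eventually_pos_nrm (hx : 0 < nrm x) : ∀ᶠ y in 𝓝 x, 0 < nrm y :=
  (continuous_nrm.tendsto x).eventually (lt_mem_nhds hx)

lemma hasFDerivAt_nrm (hx : 0 < nrm x) : HasFDerivAt nrm ((nrm x)⁻¹ • dotL x) x := by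
  have hq : HasFDerivAt (fun y : ℝ × ℝ => y.1 ^ 2 + y.2 ^ 2) ((2 : ℝ) • dotL x) x := by
    have h := dotL.hasFDerivAt_of_bilinear (hasFDerivAt_id x) (hasFDerivAt_id x)
    simp only [dotL_apply, id, ← sq] at h
    refine h.congr_fderiv ?_
    ext <;> simp only [precompR_apply, precompL_apply, compL_apply, comp_id, add_apply, comp_apply,
      inl_apply, inr_apply, id_apply, dotL_apply, smul_comp, smul_apply, smul_eq_mul] <;> ring
  refine (hq.sqrt ?_).congr_fderiv ?_
  · simpa [← nrm_sq] using hx.ne'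
  · ext <;> simp only [← nrm_sq, hx.le, Real.sqrt_sq, smul_apply, smul_comp, comp_apply,
      inl_apply, inr_apply, dotL_apply, smul_eq_mul] <;> field_simp

lemma hasFDerivAt_comp_nrm {d : ℝ} (hf : HasDerivAt f d (nrm x)) (hx : 0 < nrm x) :
    HasFDerivAt (fun y => f (nrm y)) ((d / nrm x) • dotL x) x :=
  (hf.comp_hasFDerivAt x (hasFDerivAt_nrm hx)).congr_fderiv (by rw [smul_smul, div_eq_mul_inv])

lemma hasFDerivAt_comp_nrm_smul (L : ℝ × ℝ →L[ℝ] ℝ × ℝ) {d : ℝ} (hf : HasDerivAt f d (nrm x))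
    (hx : 0 < nrm x) :
    HasFDerivAt (fun y => f (nrm y) • L y)
      (f (nrm x) • L + ((d / nrm x) • dotL x).smulRight (L x)) x :=
  (hasFDerivAt_comp_nrm hf hx).smul L.hasFDerivAt

lemma curl_eq_zero_of_hasFDerivAt {p : ℝ × ℝ → ℝ} {G : ℝ × ℝ → ℝ × ℝ}
    {G' : ℝ × ℝ →L[ℝ] ℝ × ℝ} (hp : ∀ᶠ y in 𝓝 x, HasFDerivAt p (dotL (G y)) y)
    (hG : HasFDerivAt G G' x) : (G' (0, 1)).1 = (G' (1, 0)).2 := by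
  simpa using
    second_derivative_symmetric_of_eventually hp (dotL.hasFDerivAt.comp x hG) (0, 1) (1, 0)

lemma nrm_mul_deriv_add_two_mul_eq_zero {p : ℝ × ℝ → ℝ} {a b : ℝ → ℝ} {a' b' : ℝ}
    (ha : HasDerivAt a a' (nrm x)) (hb : HasDerivAt b b' (nrm x)) (hx : 0 < nrm x)
    (hp : ∀ᶠ y in 𝓝 x, HasFDerivAt p (dotL (a (nrm y) • y + b (nrm y) • rot y)) y) :
    nrm x * b' + 2 * b (nrm x) = 0 := by
  have hG : HasFDerivAt (fun y => a (nrm y) • y + b (nrm y) • rot y) _ x :=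
    (hasFDerivAt_comp_nrm_smul (.id ℝ _) ha hx).add (hasFDerivAt_comp_nrm_smul rot hb hx)
  have h := curl_eq_zero_of_hasFDerivAt hp hG
  simp only [id_apply, rot_apply, add_apply, smul_apply, smulRight_apply, dotL_apply, Prod.smul_mk,
    smul_eq_mul, Prod.mk_add_mk, Prod.fst_add, Prod.snd_add, Prod.smul_fst, Prod.smul_snd, mul_zero,
    mul_one, zero_add, add_zero, neg_zero, mul_neg] at h
  field_simp at h
  refine mul_left_cancel₀ hx.ne' ?_
  linear_combination h + b' * nrm_sq x

def swirl (f : ℝ → ℝ) (y : ℝ × ℝ) : ℝ × ℝ := f (nrm y) • rot y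

lemma vel_eq_swirl (δ α₁ α₂ : ℝ) : vel δ α₁ α₂ = swirl fun s => prof α₁ α₂ (s - δ) / s := rfl

lemma fderiv_swirl_apply {d : ℝ} (hf : HasDerivAt f d (nrm x)) (hx : 0 < nrm x) (v : ℝ × ℝ) :
    fderiv ℝ (swirl f) x v = (d / nrm x * dotL x v) • rot x + f (nrm x) • rot v := by
  have hD : HasFDerivAt (swirl f) _ x := hasFDerivAt_comp_nrm_smul rot hf hx
  rw [hD.fderiv]
  simp only [add_apply, smul_apply, smulRight_apply, smul_eq_mul]
  exact add_comm _ _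

lemma fderiv_swirl_apply_swirl {d : ℝ} (hf : HasDerivAt f d (nrm x)) (hx : 0 < nrm x) :
    fderiv ℝ (swirl f) x (swirl f x) = -(f (nrm x) ^ 2) • x := by
  rw [fderiv_swirl_apply hf hx, swirl]
  ext <;> simp only [rot_apply, dotL_apply, Prod.smul_mk, smul_eq_mul, Prod.mk_add_mk, neg_smul,
    Prod.fst_neg, Prod.snd_neg, Prod.smul_fst, Prod.smul_snd] <;> ring

lemma fderiv_fderiv_swirl_apply_self (hf : ∀ s > 0, HasDerivAt f (f' s) s)
    (hf' : HasDerivAt f' (f'' (nrm x)) (nrm x)) (hx : 0 < nrm x) (e : ℝ × ℝ) :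
    fderiv ℝ (fun y => fderiv ℝ (swirl f) y e) x e =
      (2 * (f' (nrm x) / nrm x) * dotL x e) • rot e +
        (f' (nrm x) / nrm x * dotL e e +
          (f'' (nrm x) / nrm x - f' (nrm x) / nrm x ^ 2) / nrm x * dotL x e ^ 2) • rot x := by
  have hφ : HasDerivAt (fun s => f' s / s)
      ((f'' (nrm x) * nrm x - f' (nrm x) * 1) / nrm x ^ 2) (nrm x) :=
    hf'.div (hasDerivAt_id _) hx.ne'
  have hev : (fun y => fderiv ℝ (swirl f) y e) =ᶠ[𝓝 x]
      fun y => (f' (nrm y) / nrm y * dotL e y) • rot y + f (nrm y) • rot e := by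
    filter_upwards [eventually_pos_nrm hx] with y hy
    rw [fderiv_swirl_apply (hf _ hy) hy, dotL_comm]
  have hD : HasFDerivAt
      (fun y => (f' (nrm y) / nrm y * dotL e y) • rot y + f (nrm y) • rot e) _ x :=
    (((hasFDerivAt_comp_nrm hφ hx).mul (dotL e).hasFDerivAt).smul rot.hasFDerivAt).add
      ((hasFDerivAt_comp_nrm (hf _ hx) hx).smul_const (rot e))
  rw [hev.fderiv_eq, hD.fderiv]
  ext <;> simp only [Pi.mul_apply, dotL_apply, rot_apply, add_apply, smul_apply, smulRight_apply,
    Prod.smul_mk, smul_eq_mul, Prod.mk_add_mk] <;> field_simp <;> ring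

lemma lap_swirl (hf : ∀ s > 0, HasDerivAt f (f' s) s)
    (hf' : HasDerivAt f' (f'' (nrm x)) (nrm x)) (hx : 0 < nrm x) :
    lap (swirl f) x = (f'' (nrm x) + 3 * f' (nrm x) / nrm x) • rot x := by
  rw [lap, fderiv_fderiv_swirl_apply_self hf hf' hx, fderiv_fderiv_swirl_apply_self hf hf' hx]
  have h := nrm_sq x
  ext <;> simp only [dotL_apply, rot_apply, Prod.smul_mk, smul_eq_mul, Prod.mk_add_mk] <;>
    field_simp
  · linear_combination (f' (nrm x) - nrm x * f'' (nrm x)) * x.2 * h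
  · linear_combination (nrm x * f'' (nrm x) - f' (nrm x)) * x.1 * h

lemma hasFDerivAt_of_navierStokes_swirl {ν : ℝ} {p : ℝ × ℝ → ℝ}
    (hf : ∀ s > 0, HasDerivAt f (f' s) s) (hf' : HasDerivAt f' (f'' (nrm x)) (nrm x))
    (hx : 0 < nrm x) (hp : DifferentiableAt ℝ p x)
    (hNS : (-ν) • lap (swirl f) x + fderiv ℝ (swirl f) x (swirl f x) = -grad p x) :
    HasFDerivAt p
      (dotL (f (nrm x) ^ 2 • x + (ν * (f'' (nrm x) + 3 * f' (nrm x) / nrm x)) • rot x)) x := by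
  rw [lap_swirl hf hf' hx, fderiv_swirl_apply_swirl (hf _ hx) hx, eq_neg_iff_add_eq_zero] at hNS
  have hgrad : grad p x =
      f (nrm x) ^ 2 • x + (ν * (f'' (nrm x) + 3 * f' (nrm x) / nrm x)) • rot x := by
    linear_combination (norm := module) hNS
  rw [← hgrad, dotL_grad]
  exact hp.hasFDerivAt

theorem curl_lap_swirl_eq_zero_of_navierStokes {ν g' : ℝ} {p : ℝ × ℝ → ℝ}
    (hf : ∀ s > 0, HasDerivAt f (f' s) s) (hf' : ∀ s > 0, HasDerivAt f' (f'' s) s)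
    (hg : HasDerivAt (fun s => f'' s + 3 * f' s / s) g' (nrm x)) (hx : 0 < nrm x)
    (hNS : ∀ᶠ y in 𝓝 x, DifferentiableAt ℝ p y ∧
      (-ν) • lap (swirl f) y + fderiv ℝ (swirl f) y (swirl f y) = -grad p y) :
    ν * (nrm x * g' + 2 * (f'' (nrm x) + 3 * f' (nrm x) / nrm x)) = 0 := by
  have hp : ∀ᶠ y in 𝓝 x, HasFDerivAt p
      (dotL (f (nrm y) ^ 2 • y + (ν * (f'' (nrm y) + 3 * f' (nrm y) / nrm y)) • rot y)) y := by
    filter_upwards [hNS, eventually_pos_nrm hx] with y ⟨hpy, hNSy⟩ hy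
    exact hasFDerivAt_of_navierStokes_swirl hf (hf' _ hy) hy hpy hNSy
  linear_combination nrm_mul_deriv_add_two_mul_eq_zero ((hf _ hx).pow 2) (hg.const_mul ν) hx hp

lemma hasDerivAt_prof (α₁ α₂ r : ℝ) : HasDerivAt (prof α₁ α₂) (α₁ - α₂ * r) r :=
  (((hasDerivAt_id' r).const_mul α₁).sub ((hasDerivAt_pow 2 r).const_mul (α₂ / 2))).congr_deriv
    (by ring)

lemma hasDerivAt_prof_sub_div (α₁ α₂ δ : ℝ) {r : ℝ} (hr : r ≠ 0) :
    HasDerivAt (fun s => prof α₁ α₂ (s - δ) / s)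
      ((δ * α₁ + α₂ * δ ^ 2 / 2) / r ^ 2 - α₂ / 2) r := by
  refine (((hasDerivAt_prof α₁ α₂ (r - δ)).comp_sub_const r δ).div
    (hasDerivAt_id' r) hr).congr_deriv ?_
  rw [prof]
  field_simp
  ring

lemma hasDerivAt_div_sq_sub (B C : ℝ) {r : ℝ} (hr : r ≠ 0) :
    HasDerivAt (fun s => C / s ^ 2 - B) (-(2 * C) / r ^ 3) r := by
  refine (((hasDerivAt_const r C).div (hasDerivAt_pow 2 r) (pow_ne_zero 2 hr)).sub_const
    B).congr_deriv ?_
  field_simp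
  ring

lemma hasDerivAt_lap_coeff (B C : ℝ) {r : ℝ} (hr : r ≠ 0) :
    HasDerivAt (fun s => -(2 * C) / s ^ 3 + 3 * (C / s ^ 2 - B) / s)
      (3 * B / r ^ 2 - 3 * C / r ^ 4) r := by
  refine (((hasDerivAt_const r (-(2 * C))).div (hasDerivAt_pow 3 r) (pow_ne_zero 3 hr)).add
    (((hasDerivAt_div_sq_sub B C hr).const_mul 3).div (hasDerivAt_id' r) hr)).congr_deriv ?_
  field_simp
  ring

end LaminarFlow

open LaminarFlow in
/-- The parallel laminar flow with Poiseuille-type profile cannot be a stationary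
Navier–Stokes flow near a boundary portion of constant nonzero curvature `1/δ`. -/
theorem no_stationary_parallel_laminar_flow
    (ν δ α₁ α₂ : ℝ) (hν : 0 < ν) (hδ : 0 < δ) (hα₁ : 0 < α₁) (hα₂ : 0 < α₂) :
    ∃ r₀ : ℝ, 0 < r₀ ∧
      ∀ U : Set (ℝ × ℝ), IsOpen U → IsConnected U →
        U ⊆ {x : ℝ × ℝ | δ < nrm x ∧ nrm x < δ + r₀} →
        ¬ ∃ p : ℝ × ℝ → ℝ, ContDiffOn ℝ 1 p U ∧
            ∀ x ∈ U,
              (-ν) • lap (vel δ α₁ α₂) x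
                  + fderiv ℝ (vel δ α₁ α₂) x (vel δ α₁ α₂ x)
                = -grad p x := by
  refine ⟨1, one_pos, fun U hU hUc hUsub ⟨p, hp, hNS⟩ => ?_⟩
  obtain ⟨x, hxU⟩ := hUc.nonempty
  have hx : 0 < nrm x := hδ.trans (hUsub hxU).1
  rw [vel_eq_swirl] at hNS
  set B := α₂ / 2
  set C := δ * α₁ + α₂ * δ ^ 2 / 2
  have hcurl := curl_lap_swirl_eq_zero_of_navierStokes (f' := fun s => C / s ^ 2 - B)
    (f'' := fun s => -(2 * C) / s ^ 3) (fun s hs => hasDerivAt_prof_sub_div α₁ α₂ δ hs.ne')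
    (fun s hs => hasDerivAt_div_sq_sub B C hs.ne') (hasDerivAt_lap_coeff B C hx.ne') hx (by
      filter_upwards [hU.mem_nhds hxU] with y hy
      exact ⟨(hp.differentiableOn one_ne_zero y hy).differentiableAt (hU.mem_nhds hy), hNS y hy⟩)
  have hdefect : ν * (3 * B / nrm x + C / nrm x ^ 3) = 0 := by
    rw [← neg_eq_zero, ← hcurl]
    field_simp
    ring
  exact (by positivity : 0 < ν * (3 * B / nrm x + C / nrm x ^ 3)).ne' hdefect
end
end

section
/- The limit as r → 0⁺ of the quotient [ν(−α₂ + (α₁ − α₂ r)/(r + δ) − h(r)/(r + δ)²) − ν(α₁/δ − α₂)·δ/(δ + r)] / h(r) exists and equals −ν/δ² − 2να₂/(δα₁), and this value is strictly negative. (Here the first term in the numerator is the tangential component of νΔu of the parallel laminar flow at distance r from the boundary circle, the second term ν(α₁/δ − α₂)δ/(δ+r) is the tangential component of the initial pressure gradient derived from the no-slip boundary condition, and the denominator h(r) is the tangential component of the initial velocity; hence at t = 0 the material derivative D_t u = −∇p + νΔu of the non-stationary Navier–Stokes solution points opposite to the initial parallel laminar flow direction near a boundary arc of constant curvature 1/δ,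 with the stated limiting ratio.) -/
noncomputable section

/-- At `t = 0` the ratio of the tangential component of the material derivative
`D_t u = −∇p + ν Δu` to the tangential component of the initial parallel laminar flow
converges, as the distance `r` to the boundary circle tends to `0⁺`, to the strictly
negative value `−ν/δ² − 2να₂/(δα₁)`. -/
theorem material_derivative_reverse_limit
    (ν δ α₁ α₂ : ℝ) (hν : 0 < ν) (hδ : 0 < δ) (hα₁ : 0 < α₁) (hα₂ : 0 < α₂) :
    Filter.Tendsto
      (fun r : ℝ =>
        (ν * (-α₂ + (α₁ - α₂ * r) / (r + δ) - prof α₁ α₂ r / (r + δ) ^ 2)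
            - ν * (α₁ / δ - α₂) * δ / (δ + r)) / prof α₁ α₂ r)
      (nhdsWithin 0 (Set.Ioi 0))
      (nhds (-ν / δ ^ 2 - 2 * ν * α₂ / (δ * α₁)))
    ∧ -ν / δ ^ 2 - 2 * ν * α₂ / (δ * α₁) < 0 := by
  constructor
  · set g : ℝ → ℝ := fun r =>
      -ν * (α₁ + 2 * α₂ * δ + 3 / 2 * α₂ * r) / ((r + δ) ^ 2 * (α₁ - α₂ / 2 * r)) with hg
    have hgcont : Filter.Tendsto g (nhds 0) (nhds (g 0)) := by
      apply Filter.Tendsto.div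
      · exact (Continuous.tendsto (by fun_prop) 0)
      · exact (Continuous.tendsto (by fun_prop) 0)
      · have : ((0:ℝ) + δ) ^ 2 * (α₁ - α₂ / 2 * 0) = δ ^ 2 * α₁ := by ring
        rw [this]; positivity
    have hg0 : g 0 = -ν / δ ^ 2 - 2 * ν * α₂ / (δ * α₁) := by
      simp only [hg]
      field_simp
      ring
    have hgt : Filter.Tendsto g (nhdsWithin 0 (Set.Ioi 0))
        (nhds (-ν / δ ^ 2 - 2 * ν * α₂ / (δ * α₁))) := by
      rw [← hg0]
      exact hgcont.mono_left nhdsWithin_le_nhds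
    refine hgt.congr' ?_
    have hmem : Set.Ioo (0 : ℝ) (2 * α₁ / α₂) ∈ nhdsWithin 0 (Set.Ioi 0) := by
      apply Ioo_mem_nhdsGT_of_mem
      constructor
      · exact le_refl 0
      · positivity
    filter_upwards [hmem] with r hr
    obtain ⟨hr0, hr1⟩ := hr
    have hrd : r + δ > 0 := by linarith
    have hden : α₁ - α₂ / 2 * r > 0 := by
      have h2 : r * α₂ < 2 * α₁ := (lt_div_iff₀ hα₂).mp hr1
      nlinarith
    have hprof : prof α₁ α₂ r > 0 := by
      unfold prof; nlinarith
    have hp : α₁ * r - α₂ / 2 * r ^ 2 ≠ 0 := by nlinarith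
    simp only [hg, prof]
    rw [eq_div_iff hp, div_mul_eq_mul_div, div_eq_iff (by positivity : ((r + δ) ^ 2 * (α₁ - α₂ / 2 * r)) ≠ 0)]
    field_simp
    ring
  · have h1 : 0 < ν / δ ^ 2 := by positivity
    have h2 : 0 < 2 * ν * α₂ / (δ * α₁) := by positivity
    simp only [neg_div]
    linarith
end
end

section
/- For every x = (x₁, x₂) ∈ ℝ² with x ≠ 0, writing ρ = |x|, the componentwise Laplacian of u satisfies Δu(x) = (−α₂ + (α₁ − α₂(ρ − δ))/ρ − h(ρ − δ)/ρ²) · (x₂, −x₁)/ρ; that is, Δu is everywhere tangential to the concentric circles, with coefficient −α₂ + (α₁ − α₂(ρ − δ))/ρ − h(ρ − δ)/ρ². -/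
noncomputable section

/-!
Write `u(x) = g(|x|) • J x` with `g(r) = h(r − δ)/r` and `J(x₁, x₂) = (x₂, −x₁)`. Since `J` is linear,
`Δ(g J x) = (Δg) J x + 2 J ∇g`; for a radial `g` in the plane `Δg = g'' + g'/ρ` and
`J ∇g = (g'/ρ) J x`, so `Δu = (g'' + 3 g'/ρ) J x`. Substituting `g` gives the stated coefficient.
-/

open ContinuousLinearMap Filter Topology

def dotL (x : ℝ × ℝ) : ℝ × ℝ →L[ℝ] ℝ := x.1 • fst ℝ ℝ ℝ + x.2 • snd ℝ ℝ ℝ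

@[simp] lemma dotL_apply (x v : ℝ × ℝ) : dotL x v = x.1 * v.1 + x.2 * v.2 := by simp [dotL]

def rotL : ℝ × ℝ →L[ℝ] ℝ × ℝ := (snd ℝ ℝ ℝ).prod (-fst ℝ ℝ ℝ)

@[simp] lemma rotL_apply (v : ℝ × ℝ) : rotL v = (v.2, -v.1) := rfl

lemma nrm_sq (x : ℝ × ℝ) : nrm x ^ 2 = x.1 ^ 2 + x.2 ^ 2 := Real.sq_sqrt (by positivity)

lemma nrm_pos {x : ℝ × ℝ} (hx : x ≠ 0) : 0 < nrm x := by
  refine Real.sqrt_pos.mpr ?_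
  obtain ⟨a, b⟩ := x
  obtain ha | hb : a ≠ 0 ∨ b ≠ 0 := by
    by_contra! h; exact hx (Prod.ext h.1 h.2)
  all_goals positivity

lemma hasFDerivAt_nrm {x : ℝ × ℝ} (hx : x ≠ 0) : HasFDerivAt nrm ((nrm x)⁻¹ • dotL x) x := by
  have hsq : HasFDerivAt (fun y : ℝ × ℝ => y.1 ^ 2 + y.2 ^ 2) ((2 : ℝ) • dotL x) x := by
    have h1 := (hasFDerivAt_fst (𝕜 := ℝ) (p := x)).pow 2
    have h2 := (hasFDerivAt_snd (𝕜 := ℝ) (p := x)).pow 2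
    refine (h1.add h2).congr_fderiv ?_
    refine ContinuousLinearMap.ext fun v => ?_
    simp only [nsmul_eq_mul, Nat.cast_ofNat, add_apply, smul_apply, coe_fst', coe_snd',
      smul_eq_mul, dotL_apply]
    ring
  have hs : x.1 ^ 2 + x.2 ^ 2 ≠ 0 := by rw [← nrm_sq]; exact pow_ne_zero 2 (nrm_pos hx).ne'
  refine ((Real.hasDerivAt_sqrt hs).comp_hasFDerivAt x hsq).congr_fderiv ?_
  refine ContinuousLinearMap.ext fun v => ?_
  change 1 / (2 * nrm x) * (2 * dotL x v) = (nrm x)⁻¹ * dotL x v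
  field_simp

lemma HasDerivAt.hasFDerivAt_comp_nrm {g : ℝ → ℝ} {g' : ℝ} {x : ℝ × ℝ}
    (hg : HasDerivAt g g' (nrm x)) (hx : x ≠ 0) :
    HasFDerivAt (fun y => g (nrm y)) ((g' / nrm x) • dotL x) x := by
  refine (hg.comp_hasFDerivAt x (hasFDerivAt_nrm hx)).congr_fderiv ?_
  rw [smul_smul, div_eq_mul_inv]

def circularFlow (g : ℝ → ℝ) (y : ℝ × ℝ) : ℝ × ℝ := g (nrm y) • rotL y

section circularFlow

variable {g g' : ℝ → ℝ} {x : ℝ × ℝ}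

lemma hasFDerivAt_circularFlow {c : ℝ} (hg : HasDerivAt g c (nrm x)) (hx : x ≠ 0) :
    HasFDerivAt (circularFlow g)
      (g (nrm x) • rotL + ((c / nrm x) • dotL x).smulRight (rotL x)) x :=
  (hg.hasFDerivAt_comp_nrm hx).smul rotL.hasFDerivAt

lemma fderiv_circularFlow_apply (hg : HasDerivAt g (g' (nrm x)) (nrm x)) (hx : x ≠ 0)
    (v : ℝ × ℝ) :
    fderiv ℝ (circularFlow g) x v
      = (g' (nrm x) / nrm x * dotL x v) • rotL x + g (nrm x) • rotL v := by
  rw [(hasFDerivAt_circularFlow hg hx).fderiv]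
  simp only [add_apply, smul_apply, smulRight_apply, smul_eq_mul]
  rw [add_comm]

lemma fderiv_fderiv_circularFlow_apply (hg : ∀ r > 0, HasDerivAt g (g' r) r) {c : ℝ}
    (hg' : HasDerivAt g' c (nrm x)) (hx : x ≠ 0) (v : ℝ × ℝ) :
    fderiv ℝ (fun y => fderiv ℝ (circularFlow g) y v) x v
      = ((c - g' (nrm x) / nrm x) / nrm x ^ 2 * dotL x v ^ 2
          + g' (nrm x) / nrm x * dotL v v) • rotL x
        + (2 * (g' (nrm x) / nrm x) * dotL x v) • rotL v := by
  have hρ := (nrm_pos hx).ne'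
  have hfderiv : (fun y => fderiv ℝ (circularFlow g) y v) =ᶠ[𝓝 x]
      fun y => (g' (nrm y) / nrm y * dotL y v) • rotL y + g (nrm y) • rotL v := by
    filter_upwards [isOpen_compl_singleton.mem_nhds hx] with y hy
    exact fderiv_circularFlow_apply (hg _ (nrm_pos hy)) hy v
  have hq : HasDerivAt (fun r => g' r / r) ((c * nrm x - g' (nrm x)) / nrm x ^ 2) (nrm x) :=
    (hg'.div (hasDerivAt_id' _) hρ).congr_deriv (by ring)
  have hdot : HasFDerivAt (fun y => dotL y v) (dotL v) x :=
    (dotL v).hasFDerivAt.congr_of_eventuallyEq (.of_forall fun y => by simp [mul_comm])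
  have h : HasFDerivAt
      (fun y => (g' (nrm y) / nrm y * dotL y v) • rotL y + g (nrm y) • rotL v) _ x :=
    (((hq.hasFDerivAt_comp_nrm hx).mul hdot).smul rotL.hasFDerivAt).add
      (((hg _ (nrm_pos hx)).hasFDerivAt_comp_nrm hx).smul_const (rotL v))
  rw [hfderiv.fderiv_eq, h.fderiv]
  ext <;> simp only [dotL_apply, Pi.mul_apply, rotL_apply, add_apply, smul_apply, Prod.smul_mk,
    smul_eq_mul, mul_neg, smulRight_apply, Prod.mk_add_mk] <;> field_simp <;> ring

lemma lap_circularFlow (hg : ∀ r > 0, HasDerivAt g (g' r) r) {c : ℝ}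
    (hg' : HasDerivAt g' c (nrm x)) (hx : x ≠ 0) :
    lap (circularFlow g) x = (c + 3 * g' (nrm x) / nrm x) • rotL x := by
  have hρ := (nrm_pos hx).ne'
  rw [lap, fderiv_fderiv_circularFlow_apply hg hg' hx, fderiv_fderiv_circularFlow_apply hg hg' hx]
  ext <;> simp only [dotL_apply, mul_one, mul_zero, add_zero, zero_add, neg_zero, rotL_apply,
    Prod.smul_mk, smul_eq_mul, mul_neg, Prod.mk_add_mk] <;> field_simp
  · linear_combination x.2 * (g' (nrm x) - c * nrm x) * nrm_sq x
  · linear_combination x.1 * (c * nrm x - g' (nrm x)) * nrm_sq x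

end circularFlow

lemma vel_eq_circularFlow (δ α₁ α₂ : ℝ) :
    vel δ α₁ α₂ = circularFlow fun r => prof α₁ α₂ (r - δ) / r := rfl

lemma hasDerivAt_prof (α₁ α₂ t : ℝ) : HasDerivAt (prof α₁ α₂) (α₁ - α₂ * t) t :=
  (((hasDerivAt_id' t).const_mul α₁).sub ((hasDerivAt_pow 2 t).const_mul (α₂ / 2))).congr_deriv
    (by ring)

theorem laplacian_of_parallel_laminar_flow_general
    (δ α₁ α₂ : ℝ)
    (x : ℝ × ℝ) (hx : x ≠ 0) :
    lap (vel δ α₁ α₂) x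
      = (-α₂ + (α₁ - α₂ * (nrm x - δ)) / nrm x - prof α₁ α₂ (nrm x - δ) / nrm x ^ 2) •
          ((nrm x)⁻¹ • ((x.2, -x.1) : ℝ × ℝ)) := by
  have hρ := (nrm_pos hx).ne'
  have hh (r : ℝ) : HasDerivAt (fun r => prof α₁ α₂ (r - δ)) (α₁ - α₂ * (r - δ)) r :=
    (hasDerivAt_prof α₁ α₂ (r - δ)).comp_sub_const r δ
  have hg (r : ℝ) (hr : 0 < r) : HasDerivAt (fun r => prof α₁ α₂ (r - δ) / r)
      (((α₁ - α₂ * (r - δ)) * r - prof α₁ α₂ (r - δ)) / r ^ 2) r :=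
    ((hh r).div (hasDerivAt_id' r) hr.ne').congr_deriv (by ring)
  have hnum : HasDerivAt (fun r => (α₁ - α₂ * (r - δ)) * r - prof α₁ α₂ (r - δ))
      (-α₂ * nrm x) (nrm x) :=
    (((((hasDerivAt_id' _).sub_const δ).const_mul α₂).const_sub α₁).mul (hasDerivAt_id' _)).sub
      (hh _) |>.congr_deriv (by ring)
  have hg' := hnum.div (hasDerivAt_pow 2 _) (pow_ne_zero 2 hρ)
  rw [vel_eq_circularFlow, lap_circularFlow hg hg' hx]
  ext <;> simp only [rotL_apply, Prod.smul_mk, smul_eq_mul] <;> field_simp <;> ring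

/-- The componentwise Laplacian of the parallel laminar flow is everywhere tangential
to the concentric circles, with coefficient
`−α₂ + (α₁ − α₂(ρ − δ))/ρ − h(ρ − δ)/ρ²` where `ρ = |x|`. -/
theorem laplacian_of_parallel_laminar_flow
    (δ α₁ α₂ : ℝ) (hδ : 0 < δ) (hα₁ : 0 < α₁) (hα₂ : 0 < α₂)
    (x : ℝ × ℝ) (hx : x ≠ 0) :
    lap (vel δ α₁ α₂) x
      = (-α₂ + (α₁ - α₂ * (nrm x - δ)) / nrm x - prof α₁ α₂ (nrm x - δ) / nrm x ^ 2) •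
          ((nrm x)⁻¹ • ((x.2, -x.1) : ℝ × ℝ)) :=
  laplacian_of_parallel_laminar_flow_general δ α₁ α₂ x hx
end
end

section
/- There exists r₀ > 0 such that for every r with 0 < r < r₀, one has |α₁/δ − α₂| · δ/(δ + r) ≠ |α₁/(r + δ) − α₂ r/(r + δ) − h(r)/(r + δ)² − α₂|. (This is the key algebraic contradiction in the proof that a parallel laminar flow cannot be a stationary Navier–Stokes flow near a boundary arc of constant curvature 1/δ: the pressure-line analysis would force this equality for all small r > 0, but in every sign case it reduces to the absurd relation α₂(δ/(δ + r) − 1) = h(r)/(δ + r)² + α₂ r/(r + δ) with a strictly negative left-hand side and a strictly positive right-hand side.) -/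
noncomputable section

/-- The key algebraic contradiction in the proof that a parallel laminar flow cannot be
a stationary Navier–Stokes flow near a boundary arc of constant curvature `1/δ`:
for all sufficiently small `r > 0`,
`|α₁/δ − α₂| · δ/(δ + r) ≠ |α₁/(r+δ) − α₂ r/(r+δ) − h(r)/(r+δ)² − α₂|`. -/
theorem key_algebraic_contradiction
    (δ α₁ α₂ : ℝ) (hδ : 0 < δ) (hα₁ : 0 < α₁) (hα₂ : 0 < α₂) :
    ∃ r₀ : ℝ, 0 < r₀ ∧
      ∀ r : ℝ, 0 < r → r < r₀ →
        |α₁ / δ - α₂| * (δ / (δ + r))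
          ≠ |α₁ / (r + δ) - α₂ * r / (r + δ) - prof α₁ α₂ r / (r + δ) ^ 2 - α₂| := by
  by_cases hB : α₁ - α₂ * δ ≤ 0
  · refine ⟨δ, hδ, ?_⟩
    intro r hr hrδ heq
    have hδr : (0:ℝ) < δ + r := by linarith
    have h1 : |α₁/δ - α₂| * (δ/(δ+r)) = |(α₁/δ - α₂) * (δ/(δ+r))| := by
      rw [abs_mul, abs_of_pos (div_pos hδ hδr)]
    rw [h1, abs_eq_abs] at heq
    unfold prof at heq
    have hsq : (0:ℝ) < (δ+r)^2 := by positivity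
    rcases heq with h | h
    · field_simp at h
      have key : 0 < (δ+r)^2 * (r * (α₁ + 2*α₂*δ + 3/2*α₂*r)) := by positivity
      nlinarith [key, h]
    · field_simp at h
      have key : 0 < (δ+r)^2 * (α₂*r*(3*δ + 3/2*r) - (α₁ - α₂*δ)*r - 2*δ*(α₁ - α₂*δ)) := by
        have : 0 < α₂*r*(3*δ + 3/2*r) - (α₁ - α₂*δ)*r - 2*δ*(α₁ - α₂*δ) := by
          nlinarith [mul_pos hr hα₂, mul_nonneg hr.le (neg_nonneg.2 hB), mul_nonneg hδ.le (neg_nonneg.2 hB)]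
        positivity
      nlinarith [key, h]
  · push_neg at hB
    refine ⟨min δ (4*(α₁-α₂*δ)/(9*α₂)), lt_min hδ (by positivity), ?_⟩
    intro r hr hrm heq
    have hr1 : r < δ := lt_of_lt_of_le hrm (min_le_left _ _)
    have hr2 : 9*α₂*r < 4*(α₁-α₂*δ) := by
      have := lt_of_lt_of_le hrm (min_le_right _ _)
      rw [lt_div_iff₀ (by positivity)] at this
      linarith [this]
    have hδr : (0:ℝ) < δ + r := by linarith
    have h1 : |α₁/δ - α₂| * (δ/(δ+r)) = |(α₁/δ - α₂) * (δ/(δ+r))| := by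
      rw [abs_mul, abs_of_pos (div_pos hδ hδr)]
    rw [h1, abs_eq_abs] at heq
    unfold prof at heq
    rcases heq with h | h
    · field_simp at h
      have key : 0 < (δ+r)^2 * (r * (α₁ + 2*α₂*δ + 3/2*α₂*r)) := by positivity
      nlinarith [key, h]
    · field_simp at h
      have key : 0 < (δ+r)^2 * (2*δ*(α₁-α₂*δ) + (α₁-α₂*δ)*r - α₂*r*(3*δ + 3/2*r)) := by
        have : 0 < 2*δ*(α₁-α₂*δ) + (α₁-α₂*δ)*r - α₂*r*(3*δ + 3/2*r) := by
          nlinarith [mul_pos hr hB, mul_pos hα₂ (mul_pos hr (sub_pos.2 hr1)), mul_pos hδ hB, mul_pos hα₂ hr]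
        positivity
      nlinarith [key, h]
end
end
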